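/- For every positive integer n, the Euler characteristic of the independence complex of the (n × 5)-grid graph I(Γ_{n,5}) is an even integer whose absolute value is at most 4. -/

import Mathlib

open scoped unitInterval

noncomputable section

/-- The infinite square grid graph on `ℤ × ℤ`: two points are adjacent iff the
sum of the absolute differences of the coordinates is `1`. -/
def gridGraph : SimpleGraph (ℤ × ℤ) where
  Adj p q := (p.1 - q.1).natAbs + (p.2 - q.2).natAbs = 1
  symm := by
    constructor
    intro p q h
    omega
  loopless := by constructor; intro p h; simp at h

/-- The vertex set of the `(n × k)`-grid graph `Γ_{n,k}`. -/
def gridBox (n k : ℕ) : Set (ℤ × ℤ) :=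
  {p | 1 ≤ p.1 ∧ p.1 ≤ (n : ℤ) ∧ 1 ≤ p.2 ∧ p.2 ≤ (k : ℤ)}

/-- Geometric realization of the independence complex of the induced subgraph of `G`
on the vertex set `s`, realized inside `V → ℝ` (with the product topology): the set
of finitely supported convex weightings whose support is an independent subset of `s`. -/
def IndCplx {V : Type} (G : SimpleGraph V) (s : Set V) : Set (V → ℝ) :=
  {f | (∀ v, 0 ≤ f v) ∧ {v | f v ≠ 0}.Finite ∧ {v | f v ≠ 0} ⊆ s ∧
    (∑ᶠ v, f v) = 1 ∧ ∀ v w, f v ≠ 0 → f w ≠ 0 → ¬ G.Adj v w}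

/-- The inclusion of independence complexes induced by an inclusion of vertex sets. -/
def inclMap {V : Type} (G : SimpleGraph V) {s t : Set V} (h : s ⊆ t) :
    C(↥(IndCplx G s), ↥(IndCplx G t)) where
  toFun f := ⟨f.1, by
    obtain ⟨c1, c2, c3, c4, c5⟩ := f.2
    exact ⟨c1, c2, c3.trans h, c4, c5⟩⟩
  continuous_toFun := by
    apply Continuous.subtype_mk
    exact continuous_subtype_val

/-- The `d`-dimensional unit sphere. -/
def Sph (d : ℕ) : Set (EuclideanSpace ℝ (Fin (d + 1))) := Metric.sphere 0 1

/-- A basepoint on the `d`-sphere. -/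
def SphBase (d : ℕ) : ↥(Sph d) :=
  ⟨EuclideanSpace.single (0 : Fin (d + 1)) (1 : ℝ), by
    simp [Sph, EuclideanSpace.norm_single]⟩

/-- Predicate singling out the basepoints in the disjoint union of a family of spheres
together with an extra point. -/
def sphWedgeBasePt {ι : Type} (D : ι → ℕ) : ((Σ i, ↥(Sph (D i))) ⊕ PUnit) → Prop
  | Sum.inl x => x.2 = SphBase (D x.1)
  | Sum.inr _ => True

/-- The wedge of the family of spheres with dimensions `D i`, `i : ι`;
for an empty family this is a one-point space. -/
abbrev SphereWedge {ι : Type} (D : ι → ℕ) : Type :=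
  Quot (fun p q => sphWedgeBasePt D p ∧ sphWedgeBasePt D q)

/-- Relation generating the unreduced suspension: the two cone points are the
two elements of `Bool`. -/
def suspRel (X : Type) : ((X × I) ⊕ Bool) → ((X × I) ⊕ Bool) → Prop
  | Sum.inl p, Sum.inr b => (p.2 = 0 ∧ b = false) ∨ (p.2 = 1 ∧ b = true)
  | _, _ => False

/-- Unreduced suspension (for the empty space this gives two points). -/
abbrev Susp (X : Type) : Type := Quot (suspRel X)

/-- Wedge sum of two pointed spaces. -/
abbrev Wedge (X Y : Type) (x : X) (y : Y) : Type :=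
  Quot (fun p q : X ⊕ Y => p = Sum.inl x ∧ q = Sum.inr y)

/-- The closed neighborhood `N[v]` of a vertex in the grid graph. -/
def closedNbhd (v : ℤ × ℤ) : Set (ℤ × ℤ) := {w | w = v ∨ gridGraph.Adj v w}

/-- The vertex sets of the graphs `A_{n,k}`, induced subgraphs of the grid graph. -/
def Aset (n : ℕ) : ℕ → Set (ℤ × ℤ)
  | 0 => gridBox n 5
  | k + 1 =>
      Aset n k ∪
      (({(n : ℤ) + 5 * k + 1, (n : ℤ) + 5 * k + 2} : Set ℤ) ×ˢ ({2, 4} : Set ℤ)) ∪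
      (({(n : ℤ) + 5 * k + 2, (n : ℤ) + 5 * k + 3, (n : ℤ) + 5 * k + 4,
          (n : ℤ) + 5 * k + 5} : Set ℤ) ×ˢ ({1, 5} : Set ℤ)) ∪
      (({(n : ℤ) + 5 * k + 5} : Set ℤ) ×ˢ ({2, 3, 4} : Set ℤ))

open scoped Classical in
/-- The set of faces (nonempty independent vertex sets) of the independence complex
of the `(n × 5)`-grid graph. -/
noncomputable def gridFaces5 (n : ℕ) : Finset (Finset (ℤ × ℤ)) :=
  ((Finset.Icc (1 : ℤ) (n : ℤ) ×ˢ Finset.Icc (1 : ℤ) (5 : ℤ)).powerset).filter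
    (fun s => s.Nonempty ∧ ∀ p ∈ s, ∀ q ∈ s, ¬ gridGraph.Adj p q)

/-- The Euler characteristic `χ = Σ_(i ≥ 0) (-1)^i f_i` of the independence complex of
the `(n × 5)`-grid graph, where `f_i` is the number of `i`-dimensional faces
(a face `σ` has dimension `σ.card - 1`). -/
noncomputable def gridEulerChar5 (n : ℕ) : ℤ :=
  ∑ s ∈ gridFaces5 n, (-1 : ℤ) ^ (s.card - 1)

namespace GridChi

instance decAdj : DecidableRel gridGraph.Adj := fun p q =>
  inferInstanceAs (Decidable ((p.1 - q.1).natAbs + (p.2 - q.2).natAbs = 1))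

def box (n : ℕ) : Finset (ℤ × ℤ) := Finset.Icc 1 (n : ℤ) ×ˢ Finset.Icc 1 5
def Indep (s : Finset (ℤ × ℤ)) : Prop := ∀ p ∈ s, ∀ q ∈ s, ¬ gridGraph.Adj p q
instance : DecidablePred Indep := fun s => by unfold Indep; infer_instance
def allIndep (n : ℕ) : Finset (Finset (ℤ × ℤ)) := (box n).powerset.filter Indep
def colOf (a : ℤ) (s : Finset (ℤ × ℤ)) : Finset ℤ :=
  (s.filter fun p => p.1 = a).image Prod.snd
def sts : List (Finset ℤ) :=
  [∅, {1}, {2}, {3}, {4}, {5}, {1,3}, {1,4}, {1,5}, {2,4}, {2,5}, {3,5}, {1,3,5}]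
def S13 : Finset (Finset ℤ) := sts.toFinset
def U (n : ℕ) (T : Finset ℤ) : ℤ :=
  ∑ s ∈ (allIndep n).filter (fun s => colOf (n : ℤ) s = T), (-1 : ℤ) ^ s.card
def w : ℕ → Finset ℤ → ℤ
  | 0, T => if T = ∅ then 1 else 0
  | m+1, T => (-1) ^ T.card * ∑ T' ∈ S13.filter (fun T' => Disjoint T' T), w m T'
lemma S13_eq : S13 =
    (Finset.Icc (1:ℤ) 5).powerset.filter (fun T => ∀ y ∈ T, y + 1 ∉ T) := by decide
lemma mem_S13 {T : Finset ℤ} :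
    T ∈ S13 ↔ T ⊆ Finset.Icc (1:ℤ) 5 ∧ ∀ y ∈ T, y + 1 ∉ T := by
  rw [S13_eq, Finset.mem_filter, Finset.mem_powerset]
lemma mem_allIndep {n : ℕ} {s : Finset (ℤ × ℤ)} :
    s ∈ allIndep n ↔ s ⊆ box n ∧ Indep s := by
  rw [allIndep, Finset.mem_filter, Finset.mem_powerset]
lemma mem_box {n : ℕ} {p : ℤ × ℤ} :
    p ∈ box n ↔ 1 ≤ p.1 ∧ p.1 ≤ (n : ℤ) ∧ 1 ≤ p.2 ∧ p.2 ≤ 5 := by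
  simp [box, Finset.mem_Icc, and_assoc]
lemma colOf_mem_S13 {n : ℕ} {a : ℤ} {s : Finset (ℤ × ℤ)} (hs : s ∈ allIndep n) :
    colOf a s ∈ S13 := by
  obtain ⟨hsub, hind⟩ := mem_allIndep.mp hs
  rw [mem_S13]
  constructor
  · intro y hy
    simp only [colOf, Finset.mem_image, Finset.mem_filter] at hy
    obtain ⟨p, ⟨hp, hpa⟩, rfl⟩ := hy
    have := mem_box.mp (hsub hp)
    exact Finset.mem_Icc.mpr ⟨this.2.2.1, this.2.2.2⟩
  · intro y hy hy1
    simp only [colOf, Finset.mem_image, Finset.mem_filter] at hy hy1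
    obtain ⟨p, ⟨hp, hpa⟩, hp2⟩ := hy
    obtain ⟨q, ⟨hq, hqa⟩, hq2⟩ := hy1
    exact hind p hp q hq (show (p.1 - q.1).natAbs + (p.2 - q.2).natAbs = 1 by omega)

lemma sum_U_eq (n : ℕ) :
    ∑ T ∈ S13, U n T = ∑ s ∈ allIndep n, (-1 : ℤ) ^ s.card :=
  Finset.sum_fiberwise_of_maps_to (fun _ hs => colOf_mem_S13 hs) _

lemma U_succ (n : ℕ) {T : Finset ℤ} (hT : T ∈ S13) :
    U (n + 1) T = (-1) ^ T.card * ∑ T' ∈ S13.filter (fun T' => Disjoint T' T), U n T' := by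
  classical
  obtain ⟨hTsub, hTind⟩ := mem_S13.mp hT
  have hT15 : ∀ y ∈ T, 1 ≤ y ∧ y ≤ 5 := fun y hy => Finset.mem_Icc.mp (hTsub hy)
  set a : ℤ := (n : ℤ) + 1 with ha
  have hcast : ((n + 1 : ℕ) : ℤ) = a := by push_cast; ring
  set Tcol : Finset (ℤ × ℤ) := T.image (fun y => (a, y)) with hTcol
  have memTcol : ∀ p : ℤ × ℤ, p ∈ Tcol ↔ p.1 = a ∧ p.2 ∈ T := by
    intro p
    simp only [hTcol, Finset.mem_image]
    constructor
    · rintro ⟨y, hy, rfl⟩; exact ⟨rfl, hy⟩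
    · rintro ⟨h1, h2⟩; exact ⟨p.2, h2, by rw [← h1]⟩
  clear_value a Tcol
  -- RHS rewriting
  have hRHS : ∑ T' ∈ S13.filter (fun T' => Disjoint T' T), U n T'
      = ∑ s ∈ (allIndep n).filter (fun s => Disjoint (colOf (n:ℤ) s) T), (-1:ℤ) ^ s.card := by
    unfold U
    rw [Finset.sum_fiberwise_eq_sum_filter (allIndep n) (S13.filter (fun T' => Disjoint T' T))
      (colOf (n:ℤ)) (fun s => (-1:ℤ) ^ s.card)]
    apply Finset.sum_congr _ (fun _ _ => rfl)
    apply Finset.filter_congr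
    intro s hs
    simp [Finset.mem_filter, colOf_mem_S13 hs]
  rw [hRHS, Finset.mul_sum]
  unfold U
  rw [hcast]
  refine Finset.sum_nbij' (fun s => s.filter (fun p => ¬ p.1 = a))
    (fun s' => s' ∪ Tcol) ?_ ?_ ?_ ?_ ?_
  · -- maps to
    intro s hs
    rw [Finset.mem_filter] at hs
    obtain ⟨hsA, hcol⟩ := hs
    obtain ⟨hsub, hind⟩ := mem_allIndep.mp hsA
    have hyT : ∀ y ∈ T, (a, y) ∈ s := by
      intro y hy
      rw [← hcol] at hy
      simp only [colOf, Finset.mem_image, Finset.mem_filter] at hy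
      obtain ⟨p, ⟨hp, hpa⟩, hp2⟩ := hy
      have : p = (a, y) := Prod.ext hpa hp2
      rwa [← this]
    rw [Finset.mem_filter]
    constructor
    · rw [mem_allIndep]
      constructor
      · intro p hp
        rw [Finset.mem_filter] at hp
        have := mem_box.mp (hsub hp.1)
        rw [mem_box]
        have hpa : p.1 ≠ a := hp.2
        push_cast at this ⊢
        omega
      · intro p hp q hq
        rw [Finset.mem_filter] at hp hq
        exact hind p hp.1 q hq.1
    · -- disjointness
      rw [Finset.disjoint_left]
      intro y hy hyT'
      simp only [colOf, Finset.mem_image, Finset.mem_filter] at hy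
      obtain ⟨p, ⟨⟨hp, hpne⟩, hpn⟩, hp2⟩ := hy
      have hpy : p = ((n:ℤ), y) := Prod.ext hpn hp2
      have h1 : ((n:ℤ), y) ∈ s := by rwa [hpy] at hp
      have h2 : (a, y) ∈ s := hyT y hyT'
      exact hind _ h1 _ h2 (show ((n:ℤ) - a).natAbs + (y - y).natAbs = 1 by omega)
  · -- inverse maps to
    intro s' hs'
    rw [Finset.mem_filter] at hs'
    obtain ⟨hs'A, hdisj⟩ := hs'
    obtain ⟨hsub, hind⟩ := mem_allIndep.mp hs'A
    have hs'n : ∀ p ∈ s', p.1 ≤ (n:ℤ) := fun p hp => (mem_box.mp (hsub hp)).2.1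
    have hnotT : ∀ y ∈ T, ((n:ℤ), y) ∉ s' := by
      intro y hy hmem
      have : y ∈ colOf (n:ℤ) s' := by
        simp only [colOf, Finset.mem_image, Finset.mem_filter]
        exact ⟨((n:ℤ), y), ⟨hmem, rfl⟩, rfl⟩
      exact (Finset.disjoint_left.mp hdisj this) hy
    rw [Finset.mem_filter]
    refine ⟨mem_allIndep.mpr ⟨?_, ?_⟩, ?_⟩
    · intro p hp
      rw [Finset.mem_union] at hp
      rcases hp with hp | hp
      · have := mem_box.mp (hsub hp)
        rw [mem_box]; push_cast at this ⊢; omega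
      · rw [memTcol] at hp
        obtain ⟨h1, h2⟩ := hp
        have := hT15 _ h2
        rw [mem_box]; push_cast; omega
    · intro p hp q hq hadj
      have hadj' : (p.1 - q.1).natAbs + (p.2 - q.2).natAbs = 1 := hadj
      rw [Finset.mem_union] at hp hq
      rcases hp with hp | hp <;> rcases hq with hq | hq
      · exact hind p hp q hq hadj
      · -- p ∈ s', q ∈ Tcol
        rw [memTcol] at hq
        have hpn := hs'n p hp
        have hq1 : q.1 = a := hq.1
        have hp1 : p.1 = (n:ℤ) := by omega
        have hp2 : p.2 = q.2 := by omega
        exact hnotT q.2 hq.2 (by rw [← hp1, ← hp2]; exact hp)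
      · rw [memTcol] at hp
        have hqn := hs'n q hq
        have hp1 : p.1 = a := hp.1
        have hq1 : q.1 = (n:ℤ) := by omega
        have hq2 : q.2 = p.2 := by omega
        exact hnotT p.2 hp.2 (by rw [← hq1, ← hq2]; exact hq)
      · rw [memTcol] at hp hq
        have h1 : p.1 = a := hp.1
        have h2 : q.1 = a := hq.1
        have : (p.2 - q.2).natAbs = 1 := by omega
        rcases Int.natAbs_eq_iff.mp this with h | h
        · have e : p.2 = q.2 + 1 := by omega
          have := hp.2; rw [e] at this
          exact hTind q.2 hq.2 this
        · have e : q.2 = p.2 + 1 := by omega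
          have := hq.2; rw [e] at this
          exact hTind p.2 hp.2 this
    · -- colOf a (s' ∪ Tcol) = T
      ext y
      simp only [colOf, Finset.mem_image, Finset.mem_filter, Finset.mem_union]
      constructor
      · rintro ⟨p, ⟨hp | hp, hpa⟩, rfl⟩
        · exact absurd hpa (by have := hs'n p hp; omega)
        · exact (memTcol p).mp hp |>.2
      · intro hy
        exact ⟨(a, y), ⟨Or.inr ((memTcol _).mpr ⟨rfl, hy⟩), rfl⟩, rfl⟩
  · -- left inverse
    intro s hs
    rw [Finset.mem_filter] at hs
    obtain ⟨hsA, hcol⟩ := hs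
    obtain ⟨hsub, hind⟩ := mem_allIndep.mp hsA
    have colT : s.filter (fun p => p.1 = a) = Tcol := by
      ext p
      rw [Finset.mem_filter, memTcol]
      constructor
      · rintro ⟨hp, hpa⟩
        refine ⟨hpa, ?_⟩
        rw [← hcol]
        simp only [colOf, Finset.mem_image, Finset.mem_filter]
        exact ⟨p, ⟨hp, hpa⟩, rfl⟩
      · rintro ⟨hpa, hpT⟩
        rw [← hcol] at hpT
        simp only [colOf, Finset.mem_image, Finset.mem_filter] at hpT
        obtain ⟨q, ⟨hq, hqa⟩, hq2⟩ := hpT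
        have : q = p := Prod.ext (by rw [hqa, hpa]) hq2
        rw [← this]
        exact ⟨hq, hqa⟩
    rw [← colT, Finset.union_comm, Finset.filter_union_filter_not_eq (fun p => p.1 = a) s]
  · -- right inverse
    intro s' hs'
    rw [Finset.mem_filter] at hs'
    obtain ⟨hs'A, _⟩ := hs'
    obtain ⟨hsub, _⟩ := mem_allIndep.mp hs'A
    rw [Finset.filter_union]
    have h1 : s'.filter (fun p => ¬ p.1 = a) = s' := by
      apply Finset.filter_true_of_mem
      intro p hp
      have := (mem_box.mp (hsub hp)).2.1
      omega
    have h2 : Tcol.filter (fun p => ¬ p.1 = a) = ∅ := by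
      apply Finset.filter_false_of_mem
      intro p hp
      simp [(memTcol p).mp hp |>.1]
    rw [h1, h2, Finset.union_empty]
  · -- weights
    intro s hs
    rw [Finset.mem_filter] at hs
    obtain ⟨hsA, hcol⟩ := hs
    obtain ⟨hsub, hind⟩ := mem_allIndep.mp hsA
    have colT : s.filter (fun p => p.1 = a) = Tcol := by
      ext p
      rw [Finset.mem_filter, memTcol]
      constructor
      · rintro ⟨hp, hpa⟩
        refine ⟨hpa, ?_⟩
        rw [← hcol]
        simp only [colOf, Finset.mem_image, Finset.mem_filter]
        exact ⟨p, ⟨hp, hpa⟩, rfl⟩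
      · rintro ⟨hpa, hpT⟩
        rw [← hcol] at hpT
        simp only [colOf, Finset.mem_image, Finset.mem_filter] at hpT
        obtain ⟨q, ⟨hq, hqa⟩, hq2⟩ := hpT
        have : q = p := Prod.ext (by rw [hqa, hpa]) hq2
        rw [← this]
        exact ⟨hq, hqa⟩
    have hcard : s.card = T.card + (s.filter (fun p => ¬ p.1 = a)).card := by
      have := Finset.card_filter_add_card_filter_not (s := s) (p := fun p => p.1 = a)
      rw [colT] at this
      have hTc : Tcol.card = T.card := by
        rw [hTcol]
        exact Finset.card_image_of_injective _
          (fun y z h => by simpa using congrArg Prod.snd h)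
      omega
    rw [hcard, pow_add]

lemma w_succ (m : ℕ) (T : Finset ℤ) :
    w (m + 1) T = (-1) ^ T.card * ∑ T' ∈ S13.filter (fun T' => Disjoint T' T), w m T' := rfl

lemma U_zero : ∀ T ∈ S13, U 0 T = w 0 T := by decide

lemma U_eq_w (n : ℕ) : ∀ T ∈ S13, U n T = w n T := by
  induction n with
  | zero => exact U_zero
  | succ m ih =>
      intro T hT
      rw [U_succ m hT, w_succ]
      congr 1
      apply Finset.sum_congr rfl
      intro T' hT'
      exact ih T' (Finset.mem_filter.mp hT').1

def stepL (v : List ℤ) : List ℤ :=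
  sts.map (fun T => (-1)^T.card *
    (((sts.zip v).filter (fun p => decide (Disjoint p.1 T))).map Prod.snd).sum)

def v0L : List ℤ := sts.map (w 0)

lemma sts_nodup : sts.Nodup := by decide

lemma list_sum_eq (T : Finset ℤ) (f : Finset ℤ → ℤ) :
    ((sts.filter (fun T' => decide (Disjoint T' T))).map f).sum
      = ∑ T' ∈ S13.filter (fun T' => Disjoint T' T), f T' := by
  rw [← List.sum_toFinset _ (sts_nodup.filter _), List.toFinset_filter]
  apply Finset.sum_congr _ (fun _ _ => rfl)
  rw [S13]
  apply Finset.filter_congr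
  intro x _
  simp

lemma step_map (f : Finset ℤ → ℤ) :
    stepL (sts.map f) = sts.map (fun T =>
      (-1)^T.card * ∑ T' ∈ S13.filter (fun T' => Disjoint T' T), f T') := by
  unfold stepL
  apply List.map_congr_left
  intro T _
  congr 1
  have hz := List.zip_map' (f := id) (g := f) (l := sts)
  rw [List.map_id] at hz
  rw [hz, List.filter_map, List.map_map]
  exact list_sum_eq T f

lemma iter_map (m : ℕ) : stepL^[m] v0L = sts.map (w m) := by
  induction m with
  | zero => rfl
  | succ k ih =>
      rw [Function.iterate_succ_apply', ih, step_map]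
      apply List.map_congr_left
      intro T _
      rw [w_succ]

set_option maxRecDepth 200000 in
lemma period40 : stepL^[40] v0L = v0L := by decide

lemma w_period : ∀ T ∈ S13, w 40 T = w 0 T := by
  intro T hT
  have h := period40
  rw [iter_map, v0L] at h
  rw [S13, List.mem_toFinset] at hT
  exact List.map_inj_left.mp h T hT

lemma w_add_40 : ∀ m, ∀ T ∈ S13, w (m + 40) T = w m T := by
  intro m
  induction m with
  | zero => simpa using w_period
  | succ k ih =>
      intro T hT
      show w ((k + 40) + 1) T = w (k + 1) T
      rw [w_succ, w_succ]
      exact congrArg ((-1) ^ T.card * ·)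
        (Finset.sum_congr rfl (fun T' hT' => ih T' (Finset.mem_filter.mp hT').1))

def zval (m : ℕ) : ℤ := ∑ T ∈ S13, w m T

lemma zval_add_40 (m : ℕ) : zval (m + 40) = zval m :=
  Finset.sum_congr rfl (fun T hT => w_add_40 m T hT)

lemma zval_eq_list (m : ℕ) : zval m = (stepL^[m] v0L).sum := by
  rw [iter_map, zval, S13, List.sum_toFinset _ sts_nodup]

set_option maxRecDepth 200000 in
lemma zval_small : ∀ r < 40, (1 - (stepL^[r] v0L).sum) % 2 = 0 ∧
    |1 - (stepL^[r] v0L).sum| ≤ 4 := by decide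

lemma zval_good (m : ℕ) : Even (1 - zval m) ∧ |1 - zval m| ≤ 4 := by
  induction m using Nat.strong_induction_on with
  | _ m ih =>
    by_cases h : m < 40
    · have := zval_small m h
      rw [← zval_eq_list] at this
      exact ⟨Int.even_iff.mpr this.1, this.2⟩
    · push_neg at h
      have e : m = (m - 40) + 40 := by omega
      rw [e, zval_add_40]
      exact ih (m - 40) (by omega)

lemma empty_mem_allIndep (n : ℕ) : ∅ ∈ allIndep n := by
  rw [mem_allIndep]
  exact ⟨Finset.empty_subset _, fun p hp => absurd hp (Finset.notMem_empty p)⟩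

lemma gridFaces5_eq (n : ℕ) :
    gridFaces5 n = (allIndep n).filter (fun s => s.Nonempty) := by
  ext s
  simp only [gridFaces5, allIndep, Finset.mem_filter, Finset.mem_powerset, box, Indep]
  tauto

lemma chi_eq (n : ℕ) : gridEulerChar5 n = 1 - zval n := by
  have h1 : zval n = ∑ T ∈ S13, U n T :=
    Finset.sum_congr rfl (fun T hT => (U_eq_w n T hT).symm)
  have h3 : ∑ s ∈ allIndep n, (-1:ℤ)^s.card
      = ∑ s ∈ (allIndep n).filter (fun s => s.Nonempty), (-1:ℤ)^s.card
        + ∑ s ∈ (allIndep n).filter (fun s => ¬ s.Nonempty), (-1:ℤ)^s.card :=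
    (Finset.sum_filter_add_sum_filter_not _ _ _).symm
  have h4 : (allIndep n).filter (fun s => ¬ s.Nonempty) = {∅} := by
    ext s
    simp only [Finset.mem_filter, Finset.not_nonempty_iff_eq_empty, Finset.mem_singleton]
    constructor
    · rintro ⟨_, h⟩; exact h
    · rintro rfl; exact ⟨empty_mem_allIndep n, rfl⟩
  have h5 : gridEulerChar5 n
      = - ∑ s ∈ (allIndep n).filter (fun s => s.Nonempty), (-1:ℤ)^s.card := by
    unfold gridEulerChar5
    rw [gridFaces5_eq, ← Finset.sum_neg_distrib]
    apply Finset.sum_congr rfl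
    intro s hs
    have hne : s.Nonempty := (Finset.mem_filter.mp hs).2
    obtain ⟨c, hc⟩ : ∃ c, s.card = c + 1 :=
      ⟨s.card - 1, by have := Finset.card_pos.mpr hne; omega⟩
    rw [hc, Nat.add_sub_cancel, pow_succ]
    ring
  have h6 : zval n = (∑ s ∈ (allIndep n).filter (fun s => s.Nonempty), (-1:ℤ)^s.card) + 1 := by
    rw [h1, sum_U_eq, h3, h4, Finset.sum_singleton]
    simp
  rw [h5, h6]
  ring

end GridChi

/-- The Euler characteristic of `I(Γ_(n,5))` is even of absolute value at most `4`. -/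
theorem eulerChar_grid5_even_and_small (n : ℕ) (hn : 1 ≤ n) :
    Even (gridEulerChar5 n) ∧ |gridEulerChar5 n| ≤ 4 := by
  rw [GridChi.chi_eq]
  exact GridChi.zval_good n
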